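/- arXiv:2207.09921 — 4 statements merged into one kernel-verified Lean document; each statement's English description precedes it below -/
import Mathlib

section
/- Let σ1, σ2 > 0 and ρ ∈ (−1,1). Then E[|X1|·X2²] − E[|X1|]·E[X2²] ≥ √2 · σ1 σ2² ρ² / √π. -/
/-!
Completing the square in `x₂` factors the bivariate density as `φ_{σ₁}(x₁) · φ_s(x₂ - m x₁)` with
`m = ρσ₂/σ₁` and `s² = σ₂²(1 - ρ²)`, i.e. `X₂ = m X₁ + Z` with `Z ~ N(0, s²)` independent of `X₁`
(made precise by the shear `x₂ ↦ x₂ + m x₁`). Expanding the square, the cross term vanishes by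
symmetry of `Z`, so `E[|X₁|^a X₂²] = s² E|X₁|^a + m² E|X₁|^(a+2)`, and the Gamma
recursion `E|X₁|^(a+2) = (a+1) σ₁² E|X₁|^a` turns this into `σ₂² (1 + a ρ²) E|X₁|^a`. For `a = 1`
the left side of the theorem is `σ₂² ρ² E|X₁| = √2 σ₁ σ₂² ρ² / √π`: the bound holds with equality.
-/

open MeasureTheory Real

/-- Centered bivariate Gaussian density with variances σ₁², σ₂² and correlation ρ. -/
noncomputable def gaussDensity2 (σ₁ σ₂ ρ x y : ℝ) : ℝ :=
  (2 * π * σ₁ * σ₂ * Real.sqrt (1 - ρ ^ 2))⁻¹ *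
    Real.exp (-(x ^ 2 / σ₁ ^ 2 - 2 * ρ * x * y / (σ₁ * σ₂) + y ^ 2 / σ₂ ^ 2) /
      (2 * (1 - ρ ^ 2)))

/-- E[|X₁|^a |X₂|^b] for the centered bivariate Gaussian. -/
noncomputable def E2 (σ₁ σ₂ ρ a b : ℝ) : ℝ :=
  ∫ q : ℝ × ℝ, |q.1| ^ a * |q.2| ^ b * gaussDensity2 σ₁ σ₂ ρ q.1 q.2

/-- E[|X|^a] for a centered Gaussian with variance σ². -/
noncomputable def E1 (σ a : ℝ) : ℝ :=
  ∫ x : ℝ, |x| ^ a * (Real.sqrt (2 * π * σ ^ 2))⁻¹ * Real.exp (-x ^ 2 / (2 * σ ^ 2))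

section AbsMoments

variable {b s : ℝ}

lemma integrable_abs_rpow_mul_exp_neg_mul_sq (hb : 0 < b) (hs : -1 < s) :
    Integrable fun x : ℝ => |x| ^ s * exp (-b * x ^ 2) := by
  have h := integrable_rpow_mul_exp_neg_mul_sq hb hs
  refine (h.norm.add h.comp_neg.norm).mono' (by fun_prop) (ae_of_all _ fun x => ?_)
  rcases le_total 0 x with hx | hx
  · simp [abs_of_nonneg hx, abs_of_nonneg (rpow_nonneg hx s)]
    positivity
  · simp [abs_of_nonpos hx, abs_of_nonneg (rpow_nonneg (neg_nonneg.2 hx) s)]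
    positivity

lemma integral_abs_rpow_mul_exp_neg_mul_sq (hb : 0 < b) (hs : -1 < s) :
    ∫ x : ℝ, |x| ^ s * exp (-b * x ^ 2) = b ^ (-(s + 1) / 2) * Gamma ((s + 1) / 2) := by
  have hcomp := integral_comp_abs (f := fun t : ℝ => t ^ s * exp (-b * t ^ 2))
  have hIoi := integral_rpow_mul_exp_neg_mul_rpow two_pos hs hb
  simp only [rpow_two, sq_abs] at hcomp hIoi
  rw [hcomp, hIoi]
  ring

end AbsMoments

noncomputable def gaussDensity (σ x : ℝ) : ℝ :=
  (√(2 * π * σ ^ 2))⁻¹ * exp (-x ^ 2 / (2 * σ ^ 2))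

section GaussDensity

variable {σ a : ℝ}

lemma E1_eq_integral_abs_rpow_mul_gaussDensity (σ a : ℝ) :
    E1 σ a = ∫ x, |x| ^ a * gaussDensity σ x := by
  simp only [E1, gaussDensity, mul_assoc]

lemma gaussDensity_eq (σ x : ℝ) :
    gaussDensity σ x = (√(2 * π * σ ^ 2))⁻¹ * exp (-(2 * σ ^ 2)⁻¹ * x ^ 2) := by
  rw [gaussDensity, neg_mul, neg_div, div_eq_inv_mul]

lemma integrable_abs_rpow_mul_gaussDensity (hσ : σ ≠ 0) (ha : -1 < a) :
    Integrable fun x => |x| ^ a * gaussDensity σ x := by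
  simp_rw [gaussDensity_eq, mul_left_comm _ (√(2 * π * σ ^ 2))⁻¹]
  exact (integrable_abs_rpow_mul_exp_neg_mul_sq (by positivity) ha).const_mul _

lemma gaussDensity_nonneg (σ x : ℝ) : 0 ≤ gaussDensity σ x := by
  unfold gaussDensity
  positivity

lemma integrable_mul_abs_rpow_mul_gaussDensity (hσ : σ ≠ 0) (ha : -1 < a) :
    Integrable fun x => x * (|x| ^ a * gaussDensity σ x) := by
  refine (integrable_abs_rpow_mul_gaussDensity hσ (a := a + 1) (by linarith)).mono'
    (by unfold gaussDensity; fun_prop) (ae_of_all _ fun x => le_of_eq ?_)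
  rw [norm_mul, norm_mul, norm_eq_abs, norm_eq_abs, norm_eq_abs,
    abs_of_nonneg (rpow_nonneg (abs_nonneg x) a), abs_of_nonneg (gaussDensity_nonneg σ x),
    rpow_add_one' (abs_nonneg x) (by linarith)]
  ring

lemma abs_rpow_add_two (x : ℝ) (ha : a + 2 ≠ 0) : |x| ^ (a + 2) = x ^ 2 * |x| ^ a := by
  rw [rpow_add' (abs_nonneg x) ha, rpow_two, sq_abs, mul_comm]

lemma integrable_sq_mul_abs_rpow_mul_gaussDensity (hσ : σ ≠ 0) (ha : -1 < a) :
    Integrable fun x => x ^ 2 * (|x| ^ a * gaussDensity σ x) := by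
  refine (integrable_abs_rpow_mul_gaussDensity hσ (a := a + 2) (by linarith)).congr
    (ae_of_all _ fun x => ?_)
  dsimp only
  rw [abs_rpow_add_two x (by linarith), mul_assoc]

lemma E1_eq (hσ : σ ≠ 0) (ha : -1 < a) :
    E1 σ a = (2 * σ ^ 2) ^ (a / 2) * Gamma ((a + 1) / 2) / √π := by
  have hc : 0 < 2 * σ ^ 2 := by positivity
  simp_rw [E1_eq_integral_abs_rpow_mul_gaussDensity, gaussDensity_eq,
    mul_left_comm _ (√(2 * π * σ ^ 2))⁻¹]
  rw [integral_const_mul, integral_abs_rpow_mul_exp_neg_mul_sq (inv_pos.2 hc) ha,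
    inv_rpow hc.le, ← rpow_neg hc.le, neg_div, neg_neg, add_div, rpow_add hc,
    ← sqrt_eq_rpow, mul_comm 2 π, mul_assoc, sqrt_mul pi_pos.le]
  have := sqrt_pos.2 hc
  field_simp

lemma E1_add_two (hσ : σ ≠ 0) (ha : -1 < a) : E1 σ (a + 2) = (a + 1) * σ ^ 2 * E1 σ a := by
  have hc : 0 < 2 * σ ^ 2 := by positivity
  rw [E1_eq hσ (by linarith), E1_eq hσ ha, add_div, div_self two_ne_zero, rpow_add_one hc.ne',
    show (a + 2 + 1) / 2 = (a + 1) / 2 + 1 by ring, Gamma_add_one (by linarith)]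
  ring

lemma E1_zero (hσ : σ ≠ 0) : E1 σ 0 = 1 := by
  rw [E1_eq hσ (by norm_num), zero_div, rpow_zero, zero_add, Gamma_one_half_eq, one_mul,
    div_self (sqrt_pos.2 pi_pos).ne']

lemma E1_one (hσ : 0 < σ) : E1 σ 1 = √2 * σ / √π := by
  rw [E1_eq hσ.ne' (by norm_num), ← sqrt_eq_rpow, sqrt_mul zero_le_two, sqrt_sq hσ.le]
  simp

lemma E1_two (hσ : σ ≠ 0) : E1 σ 2 = σ ^ 2 := by
  simpa [E1_zero hσ] using E1_add_two hσ (a := 0) (by norm_num)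

lemma integral_mul_gaussDensity (σ : ℝ) : ∫ x, x * gaussDensity σ x = 0 := by
  have heven : ∀ x, gaussDensity σ (-x) = gaussDensity σ x := fun x => by
    rw [gaussDensity, gaussDensity, neg_sq]
  have h := integral_neg_eq_self (fun x => x * gaussDensity σ x) volume
  simp only [heven, neg_mul, integral_neg] at h
  linarith

lemma integrable_gaussDensity (hσ : σ ≠ 0) : Integrable (gaussDensity σ) := by
  simpa using integrable_abs_rpow_mul_gaussDensity hσ (a := 0) (by norm_num)

lemma integrable_mul_gaussDensity (hσ : σ ≠ 0) : Integrable fun x => x * gaussDensity σ x := by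
  simpa using integrable_mul_abs_rpow_mul_gaussDensity hσ (a := 0) (by norm_num)

lemma integrable_sq_mul_gaussDensity (hσ : σ ≠ 0) :
    Integrable fun x => x ^ 2 * gaussDensity σ x := by
  simpa using integrable_sq_mul_abs_rpow_mul_gaussDensity hσ (a := 0) (by norm_num)

lemma integral_gaussDensity (hσ : σ ≠ 0) : ∫ x, gaussDensity σ x = 1 := by
  simpa [E1_eq_integral_abs_rpow_mul_gaussDensity] using E1_zero hσ

lemma integral_sq_mul_gaussDensity (hσ : σ ≠ 0) : ∫ x, x ^ 2 * gaussDensity σ x = σ ^ 2 := by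
  simpa [E1_eq_integral_abs_rpow_mul_gaussDensity, rpow_two] using E1_two hσ

end GaussDensity

def shearEquiv (c : ℝ) : ℝ × ℝ ≃ᵐ ℝ × ℝ where
  toFun p := (p.1, p.2 + c * p.1)
  invFun p := (p.1, p.2 - c * p.1)
  left_inv p := by simp
  right_inv p := by simp
  measurable_toFun := (by fun_prop : Measurable fun p : ℝ × ℝ => (p.1, p.2 + c * p.1))
  measurable_invFun := (by fun_prop : Measurable fun p : ℝ × ℝ => (p.1, p.2 - c * p.1))

lemma measurePreserving_shearEquiv (c : ℝ) :
    MeasurePreserving (shearEquiv c) (volume : Measure (ℝ × ℝ)) volume := by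
  rw [Measure.volume_eq_prod]
  exact (MeasurePreserving.id volume).skew_product (by fun_prop)
    (ae_of_all _ fun x => (measurePreserving_add_right volume (c * x)).map_eq)

lemma integral_comp_shear {E : Type*} [NormedAddCommGroup E] [NormedSpace ℝ E] (c : ℝ)
    (F : ℝ × ℝ → E) : ∫ q : ℝ × ℝ, F (q.1, q.2 + c * q.1) = ∫ q, F q :=
  (measurePreserving_shearEquiv c).integral_comp' F

lemma integral_mul_add_mul_sq_mul {f g : ℝ → ℝ} (m : ℝ)
    (hf : Integrable f) (hf₁ : Integrable fun x => x * f x)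
    (hf₂ : Integrable fun x => x ^ 2 * f x) (hg : Integrable g)
    (hg₁ : Integrable fun y => y * g y) (hg₂ : Integrable fun y => y ^ 2 * g y) :
    ∫ q : ℝ × ℝ, f q.1 * ((q.2 + m * q.1) ^ 2 * g q.2) =
      (∫ x, f x) * (∫ y, y ^ 2 * g y) + 2 * m * (∫ x, x * f x) * (∫ y, y * g y) +
        m ^ 2 * (∫ x, x ^ 2 * f x) * ∫ y, g y := by
  have hA := hf.mul_prod hg₂
  have hB := (hf₁.mul_prod hg₁).const_mul (2 * m)
  have hAB : Integrable (fun q : ℝ × ℝ =>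
      f q.1 * (q.2 ^ 2 * g q.2) + 2 * m * (q.1 * f q.1 * (q.2 * g q.2))) (volume.prod volume) :=
    hA.add hB
  have hC := (hf₂.mul_prod hg).const_mul (m ^ 2)
  rw [Measure.volume_eq_prod]
  calc _ = ∫ q : ℝ × ℝ, (f q.1 * (q.2 ^ 2 * g q.2) + 2 * m * ((q.1 * f q.1) * (q.2 * g q.2)))
          + m ^ 2 * ((q.1 ^ 2 * f q.1) * g q.2) ∂(volume.prod volume) := by
        congr 1; ext q; ring
    _ = _ := by
      rw [integral_add hAB hC, integral_add hA hB, integral_const_mul, integral_const_mul,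
        integral_prod_mul f fun y => y ^ 2 * g y,
        integral_prod_mul (fun x => x * f x) fun y => y * g y,
        integral_prod_mul (fun x => x ^ 2 * f x) g]
      ring

section Bivariate

variable {σ₁ σ₂ ρ : ℝ}

lemma gaussDensity2_eq_mul_gaussDensity (hσ₁ : 0 < σ₁) (hσ₂ : 0 < σ₂) (hρ : ρ ^ 2 < 1)
    (x y : ℝ) :
    gaussDensity2 σ₁ σ₂ ρ x y =
      gaussDensity σ₁ x * gaussDensity (σ₂ * √(1 - ρ ^ 2)) (y - ρ * σ₂ / σ₁ * x) := by
  have hτ : 0 < 1 - ρ ^ 2 := by linarith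
  have hnorm : √(2 * π * σ₁ ^ 2) * √(2 * π * (σ₂ * √(1 - ρ ^ 2)) ^ 2) =
      2 * π * σ₁ * σ₂ * √(1 - ρ ^ 2) := by
    rw [← sqrt_mul (by positivity), ← sqrt_sq (by positivity : 0 ≤ 2 * π * σ₁ * σ₂ * √(1 - ρ ^ 2))]
    congr 1
    ring
  rw [gaussDensity2, gaussDensity, gaussDensity, mul_mul_mul_comm, ← mul_inv, hnorm, ← exp_add]
  congr 2
  rw [mul_pow, sq_sqrt hτ.le]
  field_simp
  ring

theorem E2_two (hσ₁ : 0 < σ₁) (hσ₂ : 0 < σ₂) (hρ : ρ ^ 2 < 1) {a : ℝ} (ha : -1 < a) :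
    E2 σ₁ σ₂ ρ a 2 = σ₂ ^ 2 * (1 + a * ρ ^ 2) * E1 σ₁ a := by
  set s := σ₂ * √(1 - ρ ^ 2)
  set m := ρ * σ₂ / σ₁ with hm
  have hs : s ≠ 0 := (mul_pos hσ₂ (sqrt_pos.2 (by linarith))).ne'
  have hs2 : s ^ 2 = σ₂ ^ 2 * (1 - ρ ^ 2) := by rw [mul_pow, sq_sqrt (by linarith)]
  calc E2 σ₁ σ₂ ρ a 2
      = ∫ q : ℝ × ℝ,
          (|q.1| ^ a * gaussDensity σ₁ q.1) * (q.2 ^ 2 * gaussDensity s (q.2 - m * q.1)) := by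
        unfold E2
        congr 1; ext q
        rw [gaussDensity2_eq_mul_gaussDensity hσ₁ hσ₂ hρ, rpow_two, sq_abs]
        ring
    _ = ∫ q : ℝ × ℝ,
          (|q.1| ^ a * gaussDensity σ₁ q.1) * ((q.2 + m * q.1) ^ 2 * gaussDensity s q.2) := by
        rw [← integral_comp_shear m]
        simp only [add_sub_cancel_right]
    _ = E1 σ₁ a * s ^ 2 + 2 * m * (∫ x, x * (|x| ^ a * gaussDensity σ₁ x)) * 0 +
          m ^ 2 * E1 σ₁ (a + 2) * 1 := by
        rw [integral_mul_add_mul_sq_mul m (integrable_abs_rpow_mul_gaussDensity hσ₁.ne' ha)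
          (integrable_mul_abs_rpow_mul_gaussDensity hσ₁.ne' ha)
          (integrable_sq_mul_abs_rpow_mul_gaussDensity hσ₁.ne' ha) (integrable_gaussDensity hs)
          (integrable_mul_gaussDensity hs) (integrable_sq_mul_gaussDensity hs),
          integral_sq_mul_gaussDensity hs, integral_mul_gaussDensity, integral_gaussDensity hs,
          E1_eq_integral_abs_rpow_mul_gaussDensity, E1_eq_integral_abs_rpow_mul_gaussDensity]
        simp_rw [abs_rpow_add_two _ (by linarith : a + 2 ≠ 0), mul_assoc]
    _ = σ₂ ^ 2 * (1 + a * ρ ^ 2) * E1 σ₁ a := by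
        rw [E1_add_two hσ₁.ne' ha, hs2, hm]
        field_simp
        ring

end Bivariate

theorem gpi_quantitative_abs_sq (σ₁ σ₂ ρ : ℝ)
    (hσ₁ : 0 < σ₁) (hσ₂ : 0 < σ₂) (hρ : ρ ∈ Set.Ioo (-1 : ℝ) 1) :
    E2 σ₁ σ₂ ρ 1 2 - E1 σ₁ 1 * E1 σ₂ 2 ≥
      Real.sqrt 2 * σ₁ * σ₂ ^ 2 * ρ ^ 2 / Real.sqrt π := by
  have hρ2 : ρ ^ 2 < 1 := by nlinarith [hρ.1, hρ.2]
  rw [E2_two hσ₁ hσ₂ hρ2 (by norm_num), E1_two hσ₂.ne', E1_one hσ₁]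
  apply le_of_eq
  ring
end

section
/- Let σ1, σ2 > 0, ρ ∈ (−1,1), and let m, n be even integers with m > 2 and n > 2. Then E[X1^m · X2^n] − E[X1^m]·E[X2^n] ≥ (m−1)!! (n−1)!! m n σ1^m σ2^n ρ² / 2. -/
/-!
Write `(X₁, X₂) = (σ₁ U, σ₂ W)` with `W = ρ U + s V`, `s = √(1 - ρ²)` and `U`, `V` independent
standard Gaussians. For even `m`, `n` a binomial expansion gives
`E[|X₁|^m |X₂|^n] = σ₁^m σ₂^n T(m, n)`, where `T(a, b) = E[U^a W^b]` is a finite sum of products of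
the moments `μ_k = E[U^k]`. `T` obeys the Gaussian integration-by-parts recursion
`T(a+2, b+1) = (a+1) T(a, b+1) + ρ (b+1) T(a+1, b)`, and rotating `(U, V)` onto `(W, ρ V - s U)`
gives `T(0, b) = μ_b` and `T(1, b) = ρ μ_{b+1}`. For `ρ ≥ 0`, induction on `a` then shows that
`T(a, b)` is at least the part of Wick's formula with at most two pairings between `U`- and
`W`-factors, which for even `a` is `μ_a μ_b (1 + a b ρ² / 2)`; for even `a`, `T(a, b)` is even in `ρ`.
-/

open MeasureTheory Real

open Finset
open scoped Nat

noncomputable def gaussMoment : ℕ → ℝ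
  | 0 => 1
  | 1 => 0
  | k + 2 => (k + 1) * gaussMoment k

theorem gaussMoment_succ (k : ℕ) : gaussMoment (k + 1) = k * gaussMoment (k - 1) := by
  rcases k with _ | k <;> simp [gaussMoment]

theorem natCast_mul_gaussMoment (k : ℕ) :
    k * gaussMoment k = k * (k - 1) * gaussMoment (k - 2) := by
  rcases k with _ | k
  · simp
  · rw [gaussMoment_succ, show k + 1 - 2 = k - 1 by omega]
    push_cast
    ring

theorem gaussMoment_nonneg (k : ℕ) : 0 ≤ gaussMoment k := by
  induction k using gaussMoment.induct with
  | case1 | case2 => simp [gaussMoment]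
  | case3 k ih => rw [gaussMoment]; positivity

theorem gaussMoment_of_odd {k : ℕ} (hk : Odd k) : gaussMoment k = 0 := by
  induction k using gaussMoment.induct with
  | case1 => simp at hk
  | case2 => rfl
  | case3 k ih => rw [gaussMoment, ih (by simpa [Nat.odd_add] using hk), mul_zero]

theorem gaussMoment_of_even {k : ℕ} (hk : Even k) : gaussMoment k = (k - 1)‼ := by
  induction k using gaussMoment.induct with
  | case1 => simp [gaussMoment]
  | case2 => simp at hk
  | case3 k ih =>
    rcases k with _ | k
    · simp [gaussMoment]
    · rw [gaussMoment, ih (by simpa [Nat.even_add] using hk), show k + 1 + 2 - 1 = k + 2 by omega,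
        Nat.doubleFactorial_add_two]
      push_cast
      ring

/-- `E[U ^ a * (ρ * U + s * V) ^ b]` for independent standard Gaussians `U` and `V`. -/
noncomputable def mixedGaussMoment (ρ s : ℝ) (a b : ℕ) : ℝ :=
  ∑ j ∈ range (b + 1),
    (b.choose j : ℝ) * ρ ^ j * s ^ (b - j) * gaussMoment (a + j) * gaussMoment (b - j)

theorem mixedGaussMoment_zero_right (ρ s : ℝ) (a : ℕ) :
    mixedGaussMoment ρ s a 0 = gaussMoment a := by
  simp [mixedGaussMoment, gaussMoment]

theorem mixedGaussMoment_one_right (ρ s : ℝ) (a : ℕ) :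
    mixedGaussMoment ρ s a 1 = ρ * gaussMoment (a + 1) := by
  simp [mixedGaussMoment, sum_range_succ, gaussMoment]

theorem mixedGaussMoment_add_two_add_one (ρ s : ℝ) (a b : ℕ) :
    mixedGaussMoment ρ s (a + 2) (b + 1) =
      (a + 1) * mixedGaussMoment ρ s a (b + 1) + ρ * (b + 1) * mixedGaussMoment ρ s (a + 1) b := by
  set g : ℕ → ℝ := fun j => ((b + 1).choose j : ℝ) * ρ ^ j * s ^ (b + 1 - j) *
    gaussMoment (a + j) * gaussMoment (b + 1 - j)
  have hsplit : mixedGaussMoment ρ s (a + 2) (b + 1) =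
      (a + 1) * mixedGaussMoment ρ s a (b + 1) + ∑ j ∈ range (b + 2), j * g j := by
    rw [mixedGaussMoment, mixedGaussMoment, mul_sum, ← sum_add_distrib]
    refine sum_congr rfl fun j _ => ?_
    rw [show a + 2 + j = a + j + 2 by ring, gaussMoment]
    push_cast
    ring
  have hshift (i : ℕ) : ((i + 1 : ℕ) : ℝ) * g (i + 1) = ρ * (b + 1) *
      ((b.choose i : ℝ) * ρ ^ i * s ^ (b - i) * gaussMoment (a + 1 + i) * gaussMoment (b - i)) := by
    have hchoose : ((i + 1 : ℕ) : ℝ) * ((b + 1).choose (i + 1) : ℝ) = (b + 1) * (b.choose i : ℝ) := by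
      rw [mul_comm]
      exact_mod_cast (Nat.add_one_mul_choose_eq b i).symm
    simp only [g, Nat.add_sub_add_right, show a + (i + 1) = a + 1 + i by ring]
    linear_combination
      (ρ ^ (i + 1) * s ^ (b - i) * gaussMoment (a + 1 + i) * gaussMoment (b - i)) * hchoose
  rw [hsplit, sum_range_succ', sum_congr rfl fun i _ => hshift i, ← mul_sum]
  simp [mixedGaussMoment]

theorem mixedGaussMoment_neg_of_even {a : ℕ} (ha : Even a) (ρ s : ℝ) (b : ℕ) :
    mixedGaussMoment (-ρ) s a b = mixedGaussMoment ρ s a b := by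
  refine sum_congr rfl fun j _ => ?_
  rcases j.even_or_odd with hj | hj
  · rw [hj.neg_pow]
  · rw [gaussMoment_of_odd (ha.add_odd hj)]
    ring

theorem integrable_pow_mul_exp_neg_sq_div_two (k : ℕ) :
    Integrable fun x : ℝ => x ^ k * exp (-x ^ 2 / 2) := by
  have h := integrable_rpow_mul_exp_neg_mul_sq (b := 1 / 2) (by norm_num) (s := k)
    (by linarith [k.cast_nonneg (α := ℝ)])
  simp only [rpow_natCast] at h
  convert h using 4
  ring

theorem integral_pow_mul_exp_neg_sq_div_two (k : ℕ) :
    ∫ x : ℝ, x ^ k * exp (-x ^ 2 / 2) = √(2 * π) * gaussMoment k := by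
  induction k using Nat.strong_induction_on with
  | _ k ih =>
  rcases k with _ | k
  · simpa [gaussMoment, div_eq_inv_mul, mul_comm] using integral_gaussian (1 / 2)
  have hderiv (x : ℝ) : HasDerivAt (fun x => -exp (-x ^ 2 / 2)) (x * exp (-x ^ 2 / 2)) x := by
    refine ((hasDerivAt_pow 2 x).neg.div_const 2).exp.neg.congr_deriv ?_
    simp only [Pi.neg_apply]
    ring
  have ibp := integral_mul_deriv_eq_deriv_mul_of_integrable (fun x _ => hasDerivAt_pow k x)
    (fun x _ => hderiv x) ?_ ?_ ?_
  · calc ∫ x : ℝ, x ^ (k + 1) * exp (-x ^ 2 / 2)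
        = ∫ x : ℝ, x ^ k * (x * exp (-x ^ 2 / 2)) := by simp only [pow_succ, mul_assoc]
      _ = k * ∫ x : ℝ, x ^ (k - 1) * exp (-x ^ 2 / 2) := by
        rw [ibp, ← integral_const_mul, ← integral_neg]
        simp only [mul_neg, neg_neg, mul_assoc]
      _ = √(2 * π) * gaussMoment (k + 1) := by
        rw [ih (k - 1) (by omega), gaussMoment_succ]
        ring
  · convert integrable_pow_mul_exp_neg_sq_div_two (k + 1) using 1
    ext x
    simp only [Pi.mul_apply]
    ring
  · convert ((integrable_pow_mul_exp_neg_sq_div_two (k - 1)).const_mul (k : ℝ)).neg using 1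
    ext x
    simp only [Pi.mul_apply, Pi.neg_apply]
    ring
  · convert (integrable_pow_mul_exp_neg_sq_div_two k).neg using 1
    ext x
    simp only [Pi.mul_apply, Pi.neg_apply]
    ring

theorem integral_comp_linear_prod (f : ℝ × ℝ → ℝ) {a b c d : ℝ} (hdet : a * d - b * c ≠ 0) :
    ∫ q : ℝ × ℝ, f (a * q.1 + b * q.2, c * q.1 + d * q.2) = |(a * d - b * c)⁻¹| * ∫ q, f q := by
  set L := Matrix.toLin (Module.Basis.finTwoProd ℝ) (Module.Basis.finTwoProd ℝ) !![a, b; c, d]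
  have hL : LinearMap.det L = a * d - b * c := by
    rw [LinearMap.det_toLin, Matrix.det_fin_two_of]
  let e := (L.equivOfDetNeZero (hL ▸ hdet)).toContinuousLinearEquiv.toHomeomorph.toMeasurableEquiv
  have h := integral_map_equiv e f (μ := volume)
  rw [show (e : ℝ × ℝ → ℝ × ℝ) = L from rfl,
    Measure.map_linearMap_addHaar_eq_smul_addHaar _ (hL ▸ hdet), integral_smul_measure,
    ENNReal.toReal_ofReal (abs_nonneg _), smul_eq_mul, hL] at h
  rw [h]
  simp [L, Matrix.toLin_finTwoProd_apply]

theorem integral_mixedGaussMoment (ρ s : ℝ) (a b : ℕ) :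
    ∫ q : ℝ × ℝ, q.1 ^ a * (ρ * q.1 + s * q.2) ^ b * (exp (-q.1 ^ 2 / 2) * exp (-q.2 ^ 2 / 2)) =
      2 * π * mixedGaussMoment ρ s a b := by
  have hexpand (q : ℝ × ℝ) :
      q.1 ^ a * (ρ * q.1 + s * q.2) ^ b * (exp (-q.1 ^ 2 / 2) * exp (-q.2 ^ 2 / 2)) =
        ∑ j ∈ range (b + 1), (b.choose j : ℝ) * ρ ^ j * s ^ (b - j) *
          ((q.1 ^ (a + j) * exp (-q.1 ^ 2 / 2)) * (q.2 ^ (b - j) * exp (-q.2 ^ 2 / 2))) := by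
    rw [add_pow, mul_sum, sum_mul]
    refine sum_congr rfl fun j _ => ?_
    ring
  have hsq : √(2 * π) * √(2 * π) = 2 * π := mul_self_sqrt (by positivity)
  simp_rw [hexpand]
  rw [integral_finsetSum]
  · rw [mixedGaussMoment, mul_sum]
    refine sum_congr rfl fun j _ => ?_
    have hprod := integral_prod_mul (μ := volume) (ν := volume)
      (fun x : ℝ => x ^ (a + j) * exp (-x ^ 2 / 2)) (fun y : ℝ => y ^ (b - j) * exp (-y ^ 2 / 2))
    rw [← Measure.volume_eq_prod] at hprod
    rw [integral_const_mul, hprod, integral_pow_mul_exp_neg_sq_div_two,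
      integral_pow_mul_exp_neg_sq_div_two]
    linear_combination
      ((b.choose j : ℝ) * ρ ^ j * s ^ (b - j) * gaussMoment (a + j) * gaussMoment (b - j)) * hsq
  · intro j _
    exact ((integrable_pow_mul_exp_neg_sq_div_two _).mul_prod
      (integrable_pow_mul_exp_neg_sq_div_two _)).const_mul _

section mixedGaussMoment

variable {ρ s : ℝ}

/-- The rotation `(u, v) ↦ (ρ u + s v, -s u + ρ v)` preserves the standard Gaussian on `ℝ²`. -/
theorem mixedGaussMoment_comm (h : ρ ^ 2 + s ^ 2 = 1) (a b : ℕ) :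
    mixedGaussMoment ρ s a b = mixedGaussMoment ρ (-s) b a := by
  have hdet : ρ * ρ - s * -s = 1 := by linear_combination h
  have hrot := integral_comp_linear_prod
    (fun q : ℝ × ℝ => q.1 ^ b * (ρ * q.1 + -s * q.2) ^ a * (exp (-q.1 ^ 2 / 2) * exp (-q.2 ^ 2 / 2)))
    (hdet ▸ one_ne_zero)
  rw [integral_mixedGaussMoment, hdet, inv_one, abs_one, one_mul] at hrot
  suffices 2 * π * mixedGaussMoment ρ s a b = 2 * π * mixedGaussMoment ρ (-s) b a by
    simpa [pi_ne_zero] using this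
  rw [← hrot, ← integral_mixedGaussMoment]
  congr with ⟨u, v⟩
  have hu : ρ * (ρ * u + s * v) + -s * (-s * u + ρ * v) = u := by linear_combination u * h
  have hexp : exp (-(ρ * u + s * v) ^ 2 / 2) * exp (-(-s * u + ρ * v) ^ 2 / 2) =
      exp (-u ^ 2 / 2) * exp (-v ^ 2 / 2) := by
    rw [← exp_add, ← exp_add]
    congr 1
    linear_combination (-(u ^ 2 + v ^ 2) / 2) * h
  simp only [hu, hexp]
  ring

theorem mixedGaussMoment_zero_left (h : ρ ^ 2 + s ^ 2 = 1) (b : ℕ) :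
    mixedGaussMoment ρ s 0 b = gaussMoment b := by
  rw [mixedGaussMoment_comm h, mixedGaussMoment_zero_right]

theorem mixedGaussMoment_one_left (h : ρ ^ 2 + s ^ 2 = 1) (b : ℕ) :
    mixedGaussMoment ρ s 1 b = ρ * gaussMoment (b + 1) := by
  rw [mixedGaussMoment_comm h, mixedGaussMoment_one_right]

end mixedGaussMoment

/-- The terms of Wick's formula for `E[U ^ a * W ^ b]`, `W = ρ * U + s * V`, in which at most two
`U`-factors are paired with `W`-factors. -/
noncomputable def truncatedWick (ρ : ℝ) (a b : ℕ) : ℝ :=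
  gaussMoment a * gaussMoment b + ρ * a * b * gaussMoment (a - 1) * gaussMoment (b - 1) +
    2 * ρ ^ 2 * a.choose 2 * b.choose 2 * gaussMoment (a - 2) * gaussMoment (b - 2)

theorem truncatedWick_add_two_add_one (ρ : ℝ) (a b : ℕ) :
    truncatedWick ρ (a + 2) (b + 1) + ρ * (b + 1) *
        (2 * ρ ^ 2 * (a + 1).choose 2 * b.choose 2 * gaussMoment (a - 1) * gaussMoment (b - 2)) =
      (a + 1) * truncatedWick ρ a (b + 1) + ρ * (b + 1) * truncatedWick ρ (a + 1) b := by
  have h₁ := gaussMoment_succ a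
  have h₂ := natCast_mul_gaussMoment a
  simp only [truncatedWick, Nat.cast_choose_two, Nat.add_sub_cancel,
    show a + 2 - 1 = a + 1 by omega, show b + 1 - 2 = b - 1 by omega,
    show a + 1 - 2 = a - 1 by omega, gaussMoment]
  push_cast
  linear_combination (ρ * (a + 1) * (b + 1) * gaussMoment b) * h₁ +
    ((a + 1) * ρ ^ 2 * b * (b + 1) / 2 * gaussMoment (b - 1)) * h₂

theorem truncatedWick_le_mixedGaussMoment {ρ s : ℝ} (hρ : 0 ≤ ρ) (h : ρ ^ 2 + s ^ 2 = 1) :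
    ∀ a b : ℕ, truncatedWick ρ a b ≤ mixedGaussMoment ρ s a b
  | 0, b => by simp [truncatedWick, mixedGaussMoment_zero_left h, gaussMoment]
  | 1, b => by
    rw [mixedGaussMoment_one_left h, gaussMoment_succ b]
    exact le_of_eq (by simp [truncatedWick, gaussMoment]; ring)
  | a + 2, 0 => by simp [truncatedWick, mixedGaussMoment_zero_right, gaussMoment.eq_1]
  | a + 2, b + 1 => by
    have ih₁ := truncatedWick_le_mixedGaussMoment hρ h a (b + 1)
    have ih₂ := truncatedWick_le_mixedGaussMoment hρ h (a + 1) b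
    have hdropped : 0 ≤ ρ * (b + 1) *
        (2 * ρ ^ 2 * (a + 1).choose 2 * b.choose 2 * gaussMoment (a - 1) * gaussMoment (b - 2)) := by
      have := gaussMoment_nonneg (a - 1)
      have := gaussMoment_nonneg (b - 2)
      positivity
    rw [mixedGaussMoment_add_two_add_one]
    have := mul_le_mul_of_nonneg_left ih₁ (by positivity : (0 : ℝ) ≤ a + 1)
    have := mul_le_mul_of_nonneg_left ih₂ (by positivity : 0 ≤ ρ * (b + 1))
    linarith [truncatedWick_add_two_add_one ρ a b]

theorem truncatedWick_of_even (ρ : ℝ) {a : ℕ} (ha : Even a) (b : ℕ) :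
    truncatedWick ρ a b = gaussMoment a * gaussMoment b * (1 + a * b * ρ ^ 2 / 2) := by
  have hodd {k : ℕ} (hk : Even k) : (k : ℝ) * gaussMoment (k - 1) = 0 := by
    rcases k with _ | k
    · simp
    · rw [Nat.add_sub_cancel, gaussMoment_of_odd (by simpa [Nat.even_add_one] using hk), mul_zero]
  have ha' := natCast_mul_gaussMoment a
  have hb' := natCast_mul_gaussMoment b
  simp only [truncatedWick, Nat.cast_choose_two]
  linear_combination ρ * (b * gaussMoment (b - 1)) * hodd ha -
    (ρ ^ 2 / 2 * b * gaussMoment b) * ha' - (ρ ^ 2 / 2 * (a * (a - 1) * gaussMoment (a - 2))) * hb'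

theorem gaussMoment_mul_le_mixedGaussMoment {ρ s : ℝ} (h : ρ ^ 2 + s ^ 2 = 1) {a : ℕ}
    (ha : Even a) (b : ℕ) :
    gaussMoment a * gaussMoment b * (1 + a * b * ρ ^ 2 / 2) ≤ mixedGaussMoment ρ s a b := by
  rcases le_total 0 ρ with hρ | hρ
  · exact truncatedWick_of_even ρ ha b ▸ truncatedWick_le_mixedGaussMoment hρ h a b
  · rw [← mixedGaussMoment_neg_of_even ha, ← neg_sq ρ, ← truncatedWick_of_even (-ρ) ha b]
    exact truncatedWick_le_mixedGaussMoment (neg_nonneg.mpr hρ) (by rwa [neg_sq]) a b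

theorem E1_eq_of_even {σ : ℝ} (hσ : 0 < σ) {m : ℕ} (hm : Even m) :
    E1 σ m = σ ^ m * gaussMoment m := by
  have hscale := Measure.integral_comp_mul_left (fun x => x ^ m * exp (-x ^ 2 / (2 * σ ^ 2))) σ
  have hsub (u : ℝ) : (σ * u) ^ m * exp (-(σ * u) ^ 2 / (2 * σ ^ 2)) =
      σ ^ m * (u ^ m * exp (-u ^ 2 / 2)) := by
    rw [mul_pow, show -(σ * u) ^ 2 / (2 * σ ^ 2) = -u ^ 2 / 2 by field_simp]
    ring
  simp only [hsub, integral_const_mul, integral_pow_mul_exp_neg_sq_div_two, abs_inv, abs_of_pos hσ,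
    smul_eq_mul] at hscale
  have hsqrt : √(2 * π * σ ^ 2) = √(2 * π) * σ := by
    rw [sqrt_mul (by positivity), sqrt_sq hσ.le]
  calc E1 σ m = (√(2 * π * σ ^ 2))⁻¹ * ∫ x : ℝ, x ^ m * exp (-x ^ 2 / (2 * σ ^ 2)) := by
        rw [E1, ← integral_const_mul]
        congr with x
        rw [rpow_natCast, hm.pow_abs]
        ring
    _ = σ ^ m * gaussMoment m := by
        rw [eq_inv_mul_iff_mul_eq₀ hσ.ne'] at hscale
        rw [← hscale, hsqrt]
        field_simp

theorem gaussDensity2_cholesky {σ₁ σ₂ ρ : ℝ} (hσ₁ : 0 < σ₁) (hσ₂ : 0 < σ₂) (hρ : ρ ^ 2 < 1) (u v : ℝ) :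
    gaussDensity2 σ₁ σ₂ ρ (σ₁ * u) (σ₂ * ρ * u + σ₂ * √(1 - ρ ^ 2) * v) =
      (2 * π * σ₁ * σ₂ * √(1 - ρ ^ 2))⁻¹ * (exp (-u ^ 2 / 2) * exp (-v ^ 2 / 2)) := by
  have hs : √(1 - ρ ^ 2) ^ 2 = 1 - ρ ^ 2 := sq_sqrt (by linarith)
  have hquad : -((σ₁ * u) ^ 2 / σ₁ ^ 2 - 2 * ρ * (σ₁ * u) * (σ₂ * ρ * u + σ₂ * √(1 - ρ ^ 2) * v) /
      (σ₁ * σ₂) + (σ₂ * ρ * u + σ₂ * √(1 - ρ ^ 2) * v) ^ 2 / σ₂ ^ 2) / (2 * (1 - ρ ^ 2)) =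
      -u ^ 2 / 2 + -v ^ 2 / 2 := by
    field_simp [show 1 - ρ ^ 2 ≠ 0 by linarith]
    linear_combination (-v ^ 2) * hs
  rw [gaussDensity2, hquad, exp_add]

theorem E2_eq_of_even {σ₁ σ₂ ρ : ℝ} (hσ₁ : 0 < σ₁) (hσ₂ : 0 < σ₂) (hρ : ρ ^ 2 < 1) {m n : ℕ}
    (hm : Even m) (hn : Even n) :
    E2 σ₁ σ₂ ρ m n = σ₁ ^ m * σ₂ ^ n * mixedGaussMoment ρ √(1 - ρ ^ 2) m n := by
  have hs : 0 < √(1 - ρ ^ 2) := sqrt_pos.mpr (by linarith)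
  have hcov := integral_comp_linear_prod
    (fun q : ℝ × ℝ => q.1 ^ m * q.2 ^ n * gaussDensity2 σ₁ σ₂ ρ q.1 q.2)
    (show σ₁ * (σ₂ * √(1 - ρ ^ 2)) - 0 * (σ₂ * ρ) ≠ 0 by rw [zero_mul, sub_zero]; positivity)
  have hpoint (q : ℝ × ℝ) : (σ₁ * q.1) ^ m * (σ₂ * ρ * q.1 + σ₂ * √(1 - ρ ^ 2) * q.2) ^ n *
      gaussDensity2 σ₁ σ₂ ρ (σ₁ * q.1) (σ₂ * ρ * q.1 + σ₂ * √(1 - ρ ^ 2) * q.2) =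
      σ₁ ^ m * σ₂ ^ n * (2 * π * σ₁ * σ₂ * √(1 - ρ ^ 2))⁻¹ * (q.1 ^ m *
        (ρ * q.1 + √(1 - ρ ^ 2) * q.2) ^ n * (exp (-q.1 ^ 2 / 2) * exp (-q.2 ^ 2 / 2))) := by
    rw [gaussDensity2_cholesky hσ₁ hσ₂ hρ, show σ₂ * ρ * q.1 + σ₂ * √(1 - ρ ^ 2) * q.2 =
      σ₂ * (ρ * q.1 + √(1 - ρ ^ 2) * q.2) by ring, mul_pow, mul_pow]
    ring
  simp only [zero_mul, add_zero, sub_zero, hpoint, integral_const_mul, integral_mixedGaussMoment,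
    abs_inv, abs_of_pos (by positivity : 0 < σ₁ * (σ₂ * √(1 - ρ ^ 2)))] at hcov
  have hE2 : E2 σ₁ σ₂ ρ m n = ∫ q : ℝ × ℝ, q.1 ^ m * q.2 ^ n * gaussDensity2 σ₁ σ₂ ρ q.1 q.2 := by
    rw [E2]
    congr with q
    rw [rpow_natCast, rpow_natCast, hm.pow_abs, hn.pow_abs]
  rw [eq_inv_mul_iff_mul_eq₀ (by positivity)] at hcov
  rw [hE2, ← hcov]
  field_simp

theorem gpi_quantitative_even_even_general (σ₁ σ₂ ρ : ℝ) (m n : ℕ)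
    (hσ₁ : 0 < σ₁) (hσ₂ : 0 < σ₂) (hρ : ρ ∈ Set.Ioo (-1 : ℝ) 1)
    (hmeven : Even m) (hneven : Even n) :
    E2 σ₁ σ₂ ρ (m : ℝ) (n : ℝ) - E1 σ₁ (m : ℝ) * E1 σ₂ (n : ℝ) ≥
      (Nat.doubleFactorial (m - 1) : ℝ) * (Nat.doubleFactorial (n - 1) : ℝ) *
        m * n * σ₁ ^ (m : ℝ) * σ₂ ^ (n : ℝ) * ρ ^ 2 / 2 := by
  have hρ₂ : ρ ^ 2 < 1 := by nlinarith [hρ.1, hρ.2]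
  have hcorr : ρ ^ 2 + √(1 - ρ ^ 2) ^ 2 = 1 := by rw [sq_sqrt (by linarith)]; ring
  rw [E2_eq_of_even hσ₁ hσ₂ hρ₂ hmeven hneven, E1_eq_of_even hσ₁ hmeven, E1_eq_of_even hσ₂ hneven,
    rpow_natCast, rpow_natCast, ← gaussMoment_of_even hmeven, ← gaussMoment_of_even hneven]
  have hbound := mul_le_mul_of_nonneg_left (gaussMoment_mul_le_mixedGaussMoment hcorr hmeven n)
    (by positivity : 0 ≤ σ₁ ^ m * σ₂ ^ n)
  linarith

theorem gpi_quantitative_even_even (σ₁ σ₂ ρ : ℝ) (m n : ℕ)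
    (hσ₁ : 0 < σ₁) (hσ₂ : 0 < σ₂) (hρ : ρ ∈ Set.Ioo (-1 : ℝ) 1)
    (hm : 2 < m) (hn : 2 < n) (hmeven : Even m) (hneven : Even n) :
    E2 σ₁ σ₂ ρ (m : ℝ) (n : ℝ) - E1 σ₁ (m : ℝ) * E1 σ₂ (n : ℝ) ≥
      (Nat.doubleFactorial (m - 1) : ℝ) * (Nat.doubleFactorial (n - 1) : ℝ) *
        m * n * σ₁ ^ (m : ℝ) * σ₂ ^ (n : ℝ) * ρ ^ 2 / 2 :=
  gpi_quantitative_even_even_general σ₁ σ₂ ρ m n hσ₁ hσ₂ hρ hmeven hneven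
end

section
/- Let α1, α2 > −1 with (1 − α1/2)(1 − α2/2) ≥ 0 (i.e. both α1, α2 ≤ 2 or both α1, α2 ≥ 2). Then for every h ∈ [0,1), F(1−α1/2, 1−α2/2; 3/2; h) ≥ 1. -/
open MeasureTheory Real

/-- Gauss hypergeometric series F(a,b;c;z). -/
noncomputable def hypF (a b c z : ℝ) : ℝ :=
  ∑' n : ℕ, (ascPochhammer ℝ n).eval a * (ascPochhammer ℝ n).eval b /
    ((ascPochhammer ℝ n).eval c * (n.factorial : ℝ)) * z ^ n

/-!
If `a, b ≥ 0` every term of the series is nonnegative and the constant term is `1`.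
If `a, b ≤ 0` we use Euler's transformation
`F(a, b; c; z) = (1 - z) ^ (c - a - b) F(c - a, c - b; c; z)`, an identity of formal power series
because both sides solve the hypergeometric differential equation, whose power series solutions
are determined by their constant term. Since `c - a, c - b ≥ c`, the Pochhammer inequality
`(c)ₙ (c - a - b)ₙ ≤ (c - a)ₙ (c - b)ₙ` bounds `F(c - a, c - b; c; z)` from below, coefficientwise,
by the series of `(1 - z) ^ (a + b - c)`, so the product is at least `1`.
-/

open PowerSeries Filter Topology

namespace Hypergeometric

noncomputable def hypSeries (a b c : ℝ) : ℝ⟦X⟧ :=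
  mk fun n => (ascPochhammer ℝ n).eval a * (ascPochhammer ℝ n).eval b /
    ((ascPochhammer ℝ n).eval c * n.factorial)

/-- The binomial series of `(1 - X) ^ (-u)`. -/
noncomputable def invOneSubRPow (u : ℝ) : ℝ⟦X⟧ :=
  mk fun n => (ascPochhammer ℝ n).eval u / n.factorial

def SolvesBinomialODE (u : ℝ) (S : ℝ⟦X⟧) : Prop :=
  (1 - X) * d⁄dX ℝ S = C u * S

def SolvesHypergeometricODE (a b c : ℝ) (S : ℝ⟦X⟧) : Prop :=
  X * (1 - X) * d⁄dX ℝ (d⁄dX ℝ S) + (C c - C (a + b + 1) * X) * d⁄dX ℝ S = C (a * b) * S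

lemma coeff_X_mul_eq_ite (S : ℝ⟦X⟧) (n : ℕ) :
    coeff n (X * S) = if n = 0 then 0 else coeff (n - 1) S := by
  cases n <;> simp [coeff_succ_X_mul]

lemma solvesBinomialODE_iff (u : ℝ) (S : ℝ⟦X⟧) :
    SolvesBinomialODE u S ↔
      ∀ n : ℕ, (n + 1 : ℝ) * coeff (n + 1) S = (u + n) * coeff n S := by
  rw [SolvesBinomialODE, PowerSeries.ext_iff]
  refine forall_congr' fun n => ?_
  rw [sub_mul, one_mul, map_sub, coeff_C_mul, coeff_X_mul_eq_ite, coeff_derivative]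
  rcases n with _ | n
  · simp [mul_comm]
  · simp [coeff_derivative]
    constructor <;> intro h <;> linarith

lemma solvesHypergeometricODE_iff (a b c : ℝ) (S : ℝ⟦X⟧) :
    SolvesHypergeometricODE a b c S ↔ ∀ n : ℕ,
      (n + 1 : ℝ) * (n + c) * coeff (n + 1) S = (n + a) * (n + b) * coeff n S := by
  rw [SolvesHypergeometricODE, PowerSeries.ext_iff]
  refine forall_congr' fun n => ?_
  have e : X * (1 - X) * d⁄dX ℝ (d⁄dX ℝ S) + (C c - C (a + b + 1) * X) * d⁄dX ℝ S
      = X * d⁄dX ℝ (d⁄dX ℝ S) - X * (X * d⁄dX ℝ (d⁄dX ℝ S))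
        + (C c * d⁄dX ℝ S - C (a + b + 1) * (X * d⁄dX ℝ S)) := by ring
  rw [e, map_add, map_sub, map_sub, coeff_C_mul, coeff_C_mul, coeff_C_mul,
    coeff_X_mul_eq_ite, coeff_X_mul_eq_ite, coeff_X_mul_eq_ite]
  rcases n with _ | _ | n <;> simp [coeff_derivative] <;> constructor <;> intro h <;> linarith

lemma eq_of_coeff_recurrence {p q : ℕ → ℝ} (hp : ∀ n, p n ≠ 0) {S T : ℝ⟦X⟧}
    (hS : ∀ n, p n * coeff (n + 1) S = q n * coeff n S)
    (hT : ∀ n, p n * coeff (n + 1) T = q n * coeff n T) (h₀ : coeff 0 S = coeff 0 T) :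
    S = T := by
  ext n
  induction n with
  | zero => exact h₀
  | succ n ih => exact mul_left_cancel₀ (hp n) ((hS n).trans (ih ▸ hT n).symm)

lemma SolvesBinomialODE.eq_of_coeff_zero_eq {u : ℝ} {S T : ℝ⟦X⟧} (hS : SolvesBinomialODE u S)
    (hT : SolvesBinomialODE u T) (h₀ : coeff 0 S = coeff 0 T) : S = T :=
  eq_of_coeff_recurrence (fun n => by positivity) ((solvesBinomialODE_iff u S).1 hS)
    ((solvesBinomialODE_iff u T).1 hT) h₀

lemma SolvesHypergeometricODE.eq_of_coeff_zero_eq {a b c : ℝ} (hc : 0 < c) {S T : ℝ⟦X⟧}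
    (hS : SolvesHypergeometricODE a b c S) (hT : SolvesHypergeometricODE a b c T)
    (h₀ : coeff 0 S = coeff 0 T) : S = T :=
  eq_of_coeff_recurrence (fun n => by positivity) ((solvesHypergeometricODE_iff a b c S).1 hS)
    ((solvesHypergeometricODE_iff a b c T).1 hT) h₀

lemma solvesBinomialODE_invOneSubRPow (u : ℝ) : SolvesBinomialODE u (invOneSubRPow u) := by
  rw [solvesBinomialODE_iff]
  intro n
  simp only [invOneSubRPow, coeff_mk, ascPochhammer_succ_eval, Nat.factorial_succ]
  push_cast
  field_simp

lemma solvesHypergeometricODE_hypSeries (a b c : ℝ) (hc : 0 < c) :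
    SolvesHypergeometricODE a b c (hypSeries a b c) := by
  rw [solvesHypergeometricODE_iff]
  intro n
  have := ascPochhammer_pos n c hc
  have : 0 < c + n := by positivity
  simp only [hypSeries, coeff_mk, ascPochhammer_succ_eval, Nat.factorial_succ]
  push_cast
  field_simp
  ring

lemma SolvesBinomialODE.mul {u v : ℝ} {S T : ℝ⟦X⟧} (hS : SolvesBinomialODE u S)
    (hT : SolvesBinomialODE v T) : SolvesBinomialODE (u + v) (S * T) := by
  unfold SolvesBinomialODE at *
  rw [Derivation.leibniz, smul_eq_mul, smul_eq_mul, map_add]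
  linear_combination T * hS + S * hT

lemma invOneSubRPow_mul (u v : ℝ) : invOneSubRPow u * invOneSubRPow v = invOneSubRPow (u + v) :=
  ((solvesBinomialODE_invOneSubRPow u).mul (solvesBinomialODE_invOneSubRPow v)).eq_of_coeff_zero_eq
    (solvesBinomialODE_invOneSubRPow _) (by simp [invOneSubRPow, coeff_zero_eq_constantCoeff])

lemma invOneSubRPow_zero : invOneSubRPow 0 = 1 := by
  ext n
  cases n <;> simp [invOneSubRPow, ascPochhammer_eval_zero, coeff_one]

lemma SolvesBinomialODE.mul_solvesHypergeometricODE {a b c : ℝ} {G W : ℝ⟦X⟧}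
    (hG : SolvesBinomialODE (a + b - c) G) (hW : SolvesHypergeometricODE (c - a) (c - b) c W) :
    SolvesHypergeometricODE a b c (G * W) := by
  unfold SolvesBinomialODE at hG
  unfold SolvesHypergeometricODE at hW ⊢
  have hG' : (1 - X) * d⁄dX ℝ (d⁄dX ℝ G) = (1 + C (a + b - c)) * d⁄dX ℝ G := by
    have hd := congrArg (d⁄dX ℝ) hG
    simp only [Derivation.leibniz, smul_eq_mul, map_add, map_sub, Derivation.map_one_eq_zero,
      derivative_X, derivative_C] at hd ⊢
    linear_combination hd
  have hD : d⁄dX ℝ (G * W) = W * d⁄dX ℝ G + G * d⁄dX ℝ W := by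
    rw [Derivation.leibniz, smul_eq_mul, smul_eq_mul, add_comm]
  have hDD : d⁄dX ℝ (d⁄dX ℝ (G * W))
      = W * d⁄dX ℝ (d⁄dX ℝ G) + 2 * (d⁄dX ℝ G * d⁄dX ℝ W) + G * d⁄dX ℝ (d⁄dX ℝ W) := by
    simp only [hD, map_add, Derivation.leibniz, smul_eq_mul]
    ring
  have h1X : (1 - X : ℝ⟦X⟧) ≠ 0 := fun h => by simpa using congrArg constantCoeff h
  refine mul_left_cancel₀ (pow_ne_zero 2 h1X) ?_
  rw [hDD, hD]
  simp only [map_add, map_sub, map_mul, map_one] at hG hG' hW ⊢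
  linear_combination ((1 - X) ^ 2 * X * W) * hG' + ((1 - X) ^ 2 * G) * hW +
    ((1 + (C a + C b - C c)) * X * (1 - X) * W + 2 * X * (1 - X) ^ 2 * d⁄dX ℝ W +
      (1 - X) * (C c - (C a + C b + 1) * X) * W) * hG

lemma invOneSubRPow_mul_hypSeries (a b c : ℝ) (hc : 0 < c) :
    invOneSubRPow (a + b - c) * hypSeries (c - a) (c - b) c = hypSeries a b c :=
  ((solvesBinomialODE_invOneSubRPow _).mul_solvesHypergeometricODE
    (solvesHypergeometricODE_hypSeries _ _ _ hc)).eq_of_coeff_zero_eq hc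
      (solvesHypergeometricODE_hypSeries _ _ _ hc)
      (by simp [invOneSubRPow, hypSeries, coeff_zero_eq_constantCoeff])

lemma ascPochhammer_eval_nonneg {x : ℝ} (hx : 0 ≤ x) (n : ℕ) :
    0 ≤ (ascPochhammer ℝ n).eval x := by
  induction n with
  | zero => simp
  | succ n ih => rw [ascPochhammer_succ_eval]; positivity

lemma ascPochhammer_eval_mul_le {A B c : ℝ} (hc : 0 < c) (hA : c ≤ A) (hB : c ≤ B) (n : ℕ) :
    (ascPochhammer ℝ n).eval c * (ascPochhammer ℝ n).eval (A + B - c) ≤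
      (ascPochhammer ℝ n).eval A * (ascPochhammer ℝ n).eval B := by
  induction n with
  | zero => simp
  | succ n ih =>
    have : 0 ≤ (ascPochhammer ℝ n).eval c * (ascPochhammer ℝ n).eval (A + B - c) :=
      mul_nonneg (ascPochhammer_pos n c hc).le (ascPochhammer_pos n _ (by linarith)).le
    have hn : (0 : ℝ) ≤ n := n.cast_nonneg
    simp only [ascPochhammer_succ_eval]
    calc _ = ((ascPochhammer ℝ n).eval c * (ascPochhammer ℝ n).eval (A + B - c)) *
            ((c + n) * (A + B - c + n)) := by ring
      _ ≤ ((ascPochhammer ℝ n).eval A * (ascPochhammer ℝ n).eval B) * ((A + n) * (B + n)) := by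
        refine mul_le_mul ih ?_ (mul_nonneg (by linarith) (by linarith)) (this.trans ih)
        -- the difference of the two sides is `(A - c) (B - c)`
        nlinarith [mul_nonneg (sub_nonneg.2 hA) (sub_nonneg.2 hB)]
      _ = _ := by ring

lemma coeff_invOneSubRPow_le_coeff_hypSeries {A B c : ℝ} (hc : 0 < c) (hA : c ≤ A) (hB : c ≤ B)
    (n : ℕ) : coeff n (invOneSubRPow (A + B - c)) ≤ coeff n (hypSeries A B c) := by
  have := ascPochhammer_pos n c hc
  simp only [invOneSubRPow, hypSeries, coeff_mk]
  calc _ = (ascPochhammer ℝ n).eval c * (ascPochhammer ℝ n).eval (A + B - c) /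
        ((ascPochhammer ℝ n).eval c * n.factorial) := by field_simp
    _ ≤ _ := div_le_div_of_nonneg_right (ascPochhammer_eval_mul_le hc hA hB n) (by positivity)

lemma invOneSubRPow_eq_hypSeries (u : ℝ) : invOneSubRPow u = hypSeries u 1 1 := by
  ext n
  have : (n.factorial : ℝ) ≠ 0 := by positivity
  simp [invOneSubRPow, hypSeries, ascPochhammer_eval_one]
  field_simp

noncomputable def tsumEval (S : ℝ⟦X⟧) (z : ℝ) : ℝ := ∑' n, coeff n S * z ^ n

lemma hypF_eq_tsumEval (a b c z : ℝ) : hypF a b c z = tsumEval (hypSeries a b c) z := by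
  simp [hypF, tsumEval, hypSeries]

lemma summable_norm_of_ratio_tendsto {f q : ℕ → ℝ} {l : ℝ} (hl : |l| < 1)
    (hq : Tendsto q atTop (𝓝 l)) (hf : ∀ n, f (n + 1) = q n * f n) :
    Summable fun n => ‖f n‖ := by
  obtain ⟨r, hlr, hr1⟩ := exists_between hl
  refine summable_of_ratio_norm_eventually_le hr1 ?_
  filter_upwards [hq.abs.eventually_lt_const hlr] with n hn
  rw [norm_norm, norm_norm, hf n, norm_mul]
  exact mul_le_mul_of_nonneg_right hn.le (norm_nonneg _)

lemma summable_norm_coeff_hypSeries_mul_pow (a b : ℝ) {c z : ℝ} (hc : 0 < c) (hz : |z| < 1) :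
    Summable fun n => ‖coeff n (hypSeries a b c) * z ^ n‖ := by
  have hq := ((tendsto_add_mul_div_add_mul_atTop_nhds a c 1 one_ne_zero).mul
    (tendsto_add_mul_div_add_mul_atTop_nhds b 1 1 one_ne_zero)).mul_const z
  rw [div_one, one_mul, one_mul] at hq
  refine summable_norm_of_ratio_tendsto hz hq fun n => ?_
  have := ascPochhammer_pos n c hc
  have : 0 < c + n := by positivity
  simp only [hypSeries, coeff_mk, ascPochhammer_succ_eval, Nat.factorial_succ, pow_succ]
  push_cast
  field_simp
  ring

lemma tsumEval_mul {S T : ℝ⟦X⟧} {z : ℝ} (hS : Summable fun n => ‖coeff n S * z ^ n‖)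
    (hT : Summable fun n => ‖coeff n T * z ^ n‖) :
    tsumEval (S * T) z = tsumEval S z * tsumEval T z := by
  rw [tsumEval, tsumEval, tsumEval, tsum_mul_tsum_eq_tsum_sum_antidiagonal_of_summable_norm hS hT]
  congr 1 with n
  rw [coeff_mul, Finset.sum_mul]
  refine Finset.sum_congr rfl fun kl hkl => ?_
  rw [← Finset.HasAntidiagonal.mem_antidiagonal.1 hkl, pow_add]
  ring

lemma tsumEval_one (z : ℝ) : tsumEval 1 z = 1 := by
  rw [tsumEval, tsum_eq_single 0] <;> simp +contextual [coeff_one]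

lemma one_le_tsumEval {S : ℝ⟦X⟧} {z : ℝ} (hz : 0 ≤ z) (hS : Summable fun n => coeff n S * z ^ n)
    (h₀ : coeff 0 S = 1) (h_nonneg : ∀ n, 0 ≤ coeff n S) : 1 ≤ tsumEval S z := by
  simpa [tsumEval, h₀] using hS.le_tsum 0 fun n _ => mul_nonneg (h_nonneg n) (pow_nonneg hz n)

lemma tsumEval_mono {S T : ℝ⟦X⟧} {z : ℝ} (hz : 0 ≤ z) (hS : Summable fun n => coeff n S * z ^ n)
    (hT : Summable fun n => coeff n T * z ^ n) (h : ∀ n, coeff n S ≤ coeff n T) :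
    tsumEval S z ≤ tsumEval T z :=
  hS.tsum_le_tsum (fun n => mul_le_mul_of_nonneg_right (h n) (pow_nonneg hz n)) hT

lemma one_le_hypF_of_nonneg {a b c z : ℝ} (ha : 0 ≤ a) (hb : 0 ≤ b) (hc : 0 < c) (hz₀ : 0 ≤ z)
    (hz₁ : z < 1) : 1 ≤ hypF a b c z := by
  rw [hypF_eq_tsumEval]
  refine one_le_tsumEval hz₀
    (summable_norm_coeff_hypSeries_mul_pow a b hc (abs_lt.2 ⟨by linarith, hz₁⟩)).of_norm
    (by simp [hypSeries]) fun n => ?_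
  have := ascPochhammer_eval_nonneg ha n
  have := ascPochhammer_eval_nonneg hb n
  have := ascPochhammer_pos n c hc
  simp only [hypSeries, coeff_mk]
  positivity

lemma one_le_hypF_of_nonpos {a b c z : ℝ} (ha : a ≤ 0) (hb : b ≤ 0) (hc : 0 < c) (hz₀ : 0 ≤ z)
    (hz₁ : z < 1) : 1 ≤ hypF a b c z := by
  have hz : |z| < 1 := abs_lt.2 ⟨by linarith, hz₁⟩
  have hW := summable_norm_coeff_hypSeries_mul_pow (c - a) (c - b) hc hz
  have hInv (u : ℝ) : Summable fun n => ‖coeff n (invOneSubRPow u) * z ^ n‖ := by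
    simpa only [invOneSubRPow_eq_hypSeries] using
      summable_norm_coeff_hypSeries_mul_pow u 1 one_pos hz
  set G := tsumEval (invOneSubRPow (a + b - c)) z
  set G' := tsumEval (invOneSubRPow (c - a + (c - b) - c)) z
  set W := tsumEval (hypSeries (c - a) (c - b) c) z
  have hF : hypF a b c z = G * W := by
    rw [hypF_eq_tsumEval, ← invOneSubRPow_mul_hypSeries a b c hc, tsumEval_mul (hInv _) hW]
  have hGG' : G * G' = 1 := by
    rw [← tsumEval_mul (hInv _) (hInv _), invOneSubRPow_mul,
      show a + b - c + (c - a + (c - b) - c) = 0 by ring, invOneSubRPow_zero, tsumEval_one]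
  have hG' : 1 ≤ G' := one_le_tsumEval hz₀ (hInv _).of_norm (by simp [invOneSubRPow])
    fun n => by
      have := ascPochhammer_eval_nonneg (x := c - a + (c - b) - c) (by linarith) n
      simp only [invOneSubRPow, coeff_mk]
      positivity
  have hG'W : G' ≤ W := tsumEval_mono hz₀ (hInv _).of_norm hW.of_norm
    (coeff_invOneSubRPow_le_coeff_hypSeries hc (by linarith) (by linarith))
  have hG : 0 < G := (pos_iff_pos_of_mul_pos (hGG' ▸ one_pos)).2 (by linarith)
  calc 1 = G * G' := hGG'.symm
    _ ≤ G * W := by gcongr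
    _ = hypF a b c z := hF.symm

theorem one_le_hypF {a b c z : ℝ} (hab : 0 ≤ a * b) (hc : 0 < c) (hz₀ : 0 ≤ z) (hz₁ : z < 1) :
    1 ≤ hypF a b c z := by
  rcases mul_nonneg_iff.1 hab with ⟨ha, hb⟩ | ⟨ha, hb⟩
  · exact one_le_hypF_of_nonneg ha hb hc hz₀ hz₁
  · exact one_le_hypF_of_nonpos ha hb hc hz₀ hz₁

end Hypergeometric

theorem hypF_ge_one_general (α₁ α₂ : ℝ)
    (hprod : 0 ≤ (1 - α₁ / 2) * (1 - α₂ / 2)) :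
    ∀ h ∈ Set.Ico (0 : ℝ) 1, hypF (1 - α₁ / 2) (1 - α₂ / 2) (3 / 2) h ≥ 1 :=
  fun _ hh => Hypergeometric.one_le_hypF hprod (by norm_num) hh.1 hh.2

theorem hypF_ge_one (α₁ α₂ : ℝ) (hα₁ : -1 < α₁) (hα₂ : -1 < α₂)
    (hprod : 0 ≤ (1 - α₁ / 2) * (1 - α₂ / 2)) :
    ∀ h ∈ Set.Ico (0 : ℝ) 1, hypF (1 - α₁ / 2) (1 - α₂ / 2) (3 / 2) h ≥ 1 :=
  hypF_ge_one_general α₁ α₂ hprod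
end

section
/- Let α1 > 2 and 0 < α2 < 2. Then for every h ∈ [0,1), F(1−α1/2, 1−α2/2; 3/2; h) ≥ Γ(3/2)·Γ((α1+α2−1)/2) / (Γ((α1+1)/2)·Γ((α2+1)/2)); that is, the function h ↦ F(1−α1/2, 1−α2/2; 3/2; h) is bounded below on [0,1) by its limiting value at h = 1 given by Gauss's summation theorem. -/
/-!
Euler's integral
  `F(a,b;c;h) · Γ(b)Γ(c-b)/Γ(c) = ∫₀¹ t^(b-1) (1-t)^(c-b-1) (1-ht)^(-a) dt`
for `0 < b < c`, `|h| < 1` comes from expanding `(1-ht)^(-a)` by the binomial series and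
integrating termwise, every term being a Beta integral. Here `a = 1 - α₁/2 = -p` with `p ≥ 0`,
so the integrand only decreases when `h` is replaced by `1`, and at `h = 1` the integral is the
Beta integral `B(b, c-b+p)`, which is Gauss's value.
-/

open MeasureTheory Real

open Set

theorem abs_ascPochhammer_eval_le (x : ℝ) (n : ℕ) :
    |(ascPochhammer ℝ n).eval x| ≤ (ascPochhammer ℝ n).eval |x| := by
  induction n with
  | zero => simp
  | succ n ih =>
    rw [ascPochhammer_succ_eval, ascPochhammer_succ_eval, abs_mul]
    have hx : |x + n| ≤ |x| + n := (abs_add_le _ _).trans_eq (by rw [Nat.abs_cast])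
    exact mul_le_mul ih hx (abs_nonneg _) ((abs_nonneg _).trans ih)

theorem Real.Gamma_add_nat_eq_ascPochhammer_eval_mul {s : ℝ} (hs : 0 < s) (n : ℕ) :
    Gamma (s + n) = (ascPochhammer ℝ n).eval s * Gamma s := by
  induction n with
  | zero => simp
  | succ n ih =>
    rw [Nat.cast_succ, ← add_assoc, Gamma_add_one (by positivity), ih, ascPochhammer_succ_eval]
    ring

theorem hasSum_ascPochhammer_eval_mul_pow_div_factorial (a : ℝ) {x : ℝ} (hx : |x| < 1) :
    HasSum (fun n : ℕ => (ascPochhammer ℝ n).eval a * x ^ n / n.factorial)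
      ((1 - x) ^ (-a)) := by
  have hmem : -x ∈ Metric.eball (0 : ℝ) 1 := by
    simpa [edist_dist, Real.dist_eq] using hx
  have hterm (n : ℕ) : binomialSeries ℝ (-a) n (fun _ => -x) =
      (ascPochhammer ℝ n).eval a * x ^ n / n.factorial := by
    rw [← neg_neg a, ascPochhammer_eval_neg_eq_descPochhammer,
      descPochhammer_eval_eq_ascPochhammer]
    simp only [binomialSeries, neg_neg, Ring.choose_eq_smul,
      Polynomial.descPochhammer_smeval_eq_ascPochhammer, Polynomial.ascPochhammer_smeval_cast,
      Polynomial.ascPochhammer_smeval_eq_eval, smul_eq_mul,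
      FormalMultilinearSeries.apply_eq_prod_smul_coeff, Finset.prod_const, Finset.card_univ,
      Fintype.card_fin, FormalMultilinearSeries.coeff_ofScalars]
    rw [neg_pow]
    ring
  simpa only [hterm, zero_add, sub_eq_add_neg] using
    (Real.one_add_rpow_hasFPowerSeriesOnBall_zero (a := -a)).hasSum hmem

theorem ofReal_rpow_mul_one_sub_rpow {t : ℝ} (ht : t ∈ Icc 0 1) (u v : ℝ) :
    ((t ^ (u - 1) * (1 - t) ^ (v - 1) : ℝ) : ℂ) =
      (t : ℂ) ^ ((u : ℂ) - 1) * (1 - (t : ℂ)) ^ ((v : ℂ) - 1) := by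
  rw [Complex.ofReal_mul, Complex.ofReal_cpow ht.1, Complex.ofReal_cpow (sub_nonneg.2 ht.2)]
  push_cast
  rfl

theorem integrableOn_rpow_mul_one_sub_rpow {u v : ℝ} (hu : 0 < u) (hv : 0 < v) :
    IntegrableOn (fun t : ℝ => t ^ (u - 1) * (1 - t) ^ (v - 1)) (Ioo 0 1) := by
  have hC := (intervalIntegrable_iff_integrableOn_Ioc_of_le zero_le_one).1
    (Complex.betaIntegral_convergent (u := u) (v := v) (by simpa) (by simpa))
  refine IntegrableOn.congr_fun (hC.mono_set Ioo_subset_Ioc_self).re (fun t ht => ?_)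
    measurableSet_Ioo
  rw [← ofReal_rpow_mul_one_sub_rpow (Ioo_subset_Icc_self ht)]
  exact Complex.ofReal_re _

theorem integral_rpow_mul_one_sub_rpow {u v : ℝ} (hu : 0 < u) (hv : 0 < v) :
    ∫ t in Ioo 0 1, t ^ (u - 1) * (1 - t) ^ (v - 1) = Gamma u * Gamma v / Gamma (u + v) := by
  have hbeta : Complex.betaIntegral u v =
      ((∫ t in Ioo 0 1, t ^ (u - 1) * (1 - t) ^ (v - 1) : ℝ) : ℂ) := by
    rw [Complex.betaIntegral, intervalIntegral.integral_congr fun t ht =>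
        (ofReal_rpow_mul_one_sub_rpow (by rwa [uIcc_of_le zero_le_one] at ht) u v).symm,
      intervalIntegral.integral_ofReal, intervalIntegral.integral_of_le zero_le_one,
      integral_Ioc_eq_integral_Ioo]
  have hΓ := Complex.Gamma_mul_Gamma_eq_betaIntegral (s := u) (t := v) (by simpa) (by simpa)
  rw [hbeta, ← Complex.ofReal_add, Complex.Gamma_ofReal, Complex.Gamma_ofReal,
    Complex.Gamma_ofReal, ← Complex.ofReal_mul, ← Complex.ofReal_mul, Complex.ofReal_inj] at hΓ
  rw [eq_div_iff (Gamma_pos_of_pos (add_pos hu hv)).ne', hΓ, mul_comm]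

theorem integral_pow_mul_rpow_mul_one_sub_rpow {u v : ℝ} (hu : 0 < u) (hv : 0 < v) (n : ℕ) :
    ∫ t in Ioo 0 1, t ^ n * (t ^ (u - 1) * (1 - t) ^ (v - 1)) =
      (ascPochhammer ℝ n).eval u / (ascPochhammer ℝ n).eval (u + v) *
        (Gamma u * Gamma v / Gamma (u + v)) := by
  have hshift : ∀ t ∈ Ioo (0 : ℝ) 1, t ^ n * (t ^ (u - 1) * (1 - t) ^ (v - 1)) =
      t ^ (u + n - 1) * (1 - t) ^ (v - 1) := fun t ht => by
    rw [← mul_assoc, ← rpow_natCast, ← rpow_add ht.1, add_sub_right_comm, add_comm (n : ℝ)]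
  rw [setIntegral_congr_fun measurableSet_Ioo hshift,
    integral_rpow_mul_one_sub_rpow (by positivity) hv, add_right_comm,
    Gamma_add_nat_eq_ascPochhammer_eval_mul hu,
    Gamma_add_nat_eq_ascPochhammer_eval_mul (add_pos hu hv)]
  have := ascPochhammer_pos n _ (add_pos hu hv)
  have := Gamma_pos_of_pos (add_pos hu hv)
  field_simp

theorem hypF_mul_Gamma_div_eq_integral (a : ℝ) {b c h : ℝ} (hb : 0 < b) (hbc : b < c)
    (hh : |h| < 1) :
    hypF a b c h * (Gamma b * Gamma (c - b) / Gamma c) =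
      ∫ t in Ioo 0 1, (1 - h * t) ^ (-a) * (t ^ (b - 1) * (1 - t) ^ (c - b - 1)) := by
  set w : ℝ → ℝ := fun t => t ^ (b - 1) * (1 - t) ^ (c - b - 1)
  set coeff : ℕ → ℝ := fun n => (ascPochhammer ℝ n).eval a * h ^ n / n.factorial
  have hcb : 0 < c - b := sub_pos.2 hbc
  have hw : IntegrableOn w (Ioo 0 1) := integrableOn_rpow_mul_one_sub_rpow hb hcb
  have hw0 : ∀ t ∈ Ioo (0 : ℝ) 1, 0 ≤ w t := fun t ht =>
    mul_nonneg (rpow_nonneg ht.1.le _) (rpow_nonneg (sub_nonneg.2 ht.2.le) _)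
  have hint (n : ℕ) : IntegrableOn (fun t => coeff n * (t ^ n * w t)) (Ioo 0 1) :=
    (hw.continuousOn_mul_of_subset (continuous_pow n).continuousOn isCompact_Icc
      measurableSet_Ioo Ioo_subset_Icc_self).const_mul _
  have hnorm (n : ℕ) : ∫ t in Ioo 0 1, ‖coeff n * (t ^ n * w t)‖ ≤
      (ascPochhammer ℝ n).eval |a| * |h| ^ n / n.factorial * ∫ t in Ioo 0 1, w t := by
    rw [← integral_const_mul]
    refine setIntegral_mono_on (hint n).norm (hw.const_mul _) measurableSet_Ioo fun t ht => ?_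
    have hpoch := abs_ascPochhammer_eval_le a n
    rw [norm_mul, norm_mul, Real.norm_of_nonneg (hw0 t ht), norm_pow, Real.norm_of_nonneg ht.1.le]
    simp only [coeff, norm_div, norm_mul, norm_pow, Real.norm_eq_abs, Nat.abs_cast]
    refine mul_le_mul (by gcongr) (mul_le_of_le_one_left (hw0 t ht) (pow_le_one₀ ht.1.le ht.2.le))
      (mul_nonneg (pow_nonneg ht.1.le n) (hw0 t ht)) ?_
    have := (abs_nonneg _).trans hpoch
    positivity
  have hsum : Summable fun n => ∫ t in Ioo 0 1, ‖coeff n * (t ^ n * w t)‖ :=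
    Summable.of_nonneg_of_le (fun n => integral_nonneg fun _ => norm_nonneg _) hnorm
      ((hasSum_ascPochhammer_eval_mul_pow_div_factorial |a|
        (by rwa [abs_abs])).summable.mul_right _)
  have hpointwise : ∀ t ∈ Ioo (0 : ℝ) 1,
      ∑' n, coeff n * (t ^ n * w t) = (1 - h * t) ^ (-a) * w t := by
    intro t ht
    have hht : |h * t| < 1 := by
      rw [abs_mul, abs_of_pos ht.1]; nlinarith [abs_nonneg h, ht.1, ht.2]
    refine (((hasSum_ascPochhammer_eval_mul_pow_div_factorial a hht).mul_right (w t)).congr_fun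
      fun n => ?_).tsum_eq
    simp only [coeff, mul_pow]
    ring
  have hterm (n : ℕ) : ∫ t in Ioo 0 1, coeff n * (t ^ n * w t) =
      (ascPochhammer ℝ n).eval a * (ascPochhammer ℝ n).eval b /
        ((ascPochhammer ℝ n).eval c * n.factorial) * h ^ n *
        (Gamma b * Gamma (c - b) / Gamma c) := by
    rw [integral_const_mul, integral_pow_mul_rpow_mul_one_sub_rpow hb hcb, add_sub_cancel]
    simp only [coeff]
    ring
  calc hypF a b c h * (Gamma b * Gamma (c - b) / Gamma c)
      = ∑' n, ∫ t in Ioo 0 1, coeff n * (t ^ n * w t) := by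
        rw [hypF, ← tsum_mul_right]; exact tsum_congr fun n => (hterm n).symm
    _ = ∫ t in Ioo 0 1, ∑' n, coeff n * (t ^ n * w t) :=
        integral_tsum_of_summable_integral_norm hint hsum
    _ = _ := setIntegral_congr_fun measurableSet_Ioo hpointwise

theorem Gamma_mul_Gamma_div_le_hypF_neg {p b c h : ℝ} (hp : 0 ≤ p) (hb : 0 < b) (hbc : b < c)
    (hh0 : 0 ≤ h) (hh1 : h < 1) :
    Gamma c * Gamma (c - b + p) / (Gamma (c - b) * Gamma (c + p)) ≤ hypF (-p) b c h := by
  set w : ℝ → ℝ := fun t => t ^ (b - 1) * (1 - t) ^ (c - b - 1)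
  have hcb : 0 < c - b := sub_pos.2 hbc
  have hΓb := Gamma_pos_of_pos hb
  have hΓcb := Gamma_pos_of_pos hcb
  have hΓc := Gamma_pos_of_pos (hb.trans hbc)
  have hint {f : ℝ → ℝ} (hf : Continuous f) : IntegrableOn (fun t => f t * w t) (Ioo 0 1) :=
    (integrableOn_rpow_mul_one_sub_rpow hb hcb).continuousOn_mul_of_subset hf.continuousOn
      isCompact_Icc measurableSet_Ioo Ioo_subset_Icc_self
  have hbeta :
      ∫ t in Ioo 0 1, (1 - t) ^ p * w t = Gamma b * Gamma (c - b + p) / Gamma (c + p) := by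
    rw [show c + p = b + (c - b + p) by ring,
      ← integral_rpow_mul_one_sub_rpow hb (add_pos_of_pos_of_nonneg hcb hp)]
    refine setIntegral_congr_fun measurableSet_Ioo fun t ht => ?_
    rw [show c - b + p - 1 = c - b - 1 + p by ring, rpow_add (sub_pos.2 ht.2)]
    ring
  have hmono : ∫ t in Ioo 0 1, (1 - t) ^ p * w t ≤ ∫ t in Ioo 0 1, (1 - h * t) ^ p * w t := by
    refine setIntegral_mono_on (hint (by fun_prop)) (hint (by fun_prop)) measurableSet_Ioo
      fun t ht => mul_le_mul_of_nonneg_right ?_ ?_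
    · exact rpow_le_rpow (sub_nonneg.2 ht.2.le) (by nlinarith [ht.1, ht.2]) hp
    · exact mul_nonneg (rpow_nonneg ht.1.le _) (rpow_nonneg (sub_nonneg.2 ht.2.le) _)
  rw [hbeta, ← neg_neg p,
    ← hypF_mul_Gamma_div_eq_integral (-p) hb hbc (by rwa [abs_of_nonneg hh0]), neg_neg,
    ← div_le_iff₀ (by positivity)] at hmono
  calc Gamma c * Gamma (c - b + p) / (Gamma (c - b) * Gamma (c + p))
      = Gamma b * Gamma (c - b + p) / Gamma (c + p) / (Gamma b * Gamma (c - b) / Gamma c) := by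
        field_simp
    _ ≤ hypF (-p) b c h := hmono

theorem hypF_ge_gauss_value (α₁ α₂ : ℝ) (hα₁ : 2 < α₁) (hα₂ : α₂ ∈ Set.Ioo (0 : ℝ) 2) :
    ∀ h ∈ Set.Ico (0 : ℝ) 1,
      hypF (1 - α₁ / 2) (1 - α₂ / 2) (3 / 2) h ≥
        Real.Gamma (3 / 2) * Real.Gamma ((α₁ + α₂ - 1) / 2) /
          (Real.Gamma ((α₁ + 1) / 2) * Real.Gamma ((α₂ + 1) / 2)) := by
  rintro h ⟨hh0, hh1⟩
  have key := Gamma_mul_Gamma_div_le_hypF_neg (p := α₁ / 2 - 1) (b := 1 - α₂ / 2) (c := 3 / 2)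
    (by linarith) (by linarith [hα₂.2]) (by linarith [hα₂.1]) hh0 hh1
  rw [show 3 / 2 - (1 - α₂ / 2) + (α₁ / 2 - 1) = (α₁ + α₂ - 1) / 2 by ring,
    show 3 / 2 - (1 - α₂ / 2) = (α₂ + 1) / 2 by ring,
    show (3 : ℝ) / 2 + (α₁ / 2 - 1) = (α₁ + 1) / 2 by ring, neg_sub] at key
  rw [ge_iff_le, mul_comm (Gamma ((α₁ + 1) / 2))]
  exact key
end
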